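/- arXiv:2510.15348 — 4 statements merged into one kernel-verified Lean document; each statement's English description precedes it below -/
import Mathlib

section
/- Let G and H be groups acting on an infinite set Ω. If G and H share the same orbits on the set Ω^(n) of pairwise-distinct n-tuples for some n ≥ 1, then for every s ≤ n they share the same orbits on Ω^(s). -/
/- An injective `s`-tuple extends to an injective `n`-tuple because `Ω` is infinite, and the
`G`- and `H`-orbits of the shorter tuple are the images of those of the longer one under
restriction of coordinates. -/

theorem MulAction.orbit_comp_right {M α ι κ : Type*} [Monoid M] [MulAction M α]
    (x : ι → α) (f : κ → ι) :
    MulAction.orbit M (x ∘ f) = (· ∘ f) '' MulAction.orbit M x :=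
  Set.range_comp (· ∘ f) (fun m : M => m • x)

theorem same_orbits_distinct_tuples_down_general {Ω G H : Type*} [Group G] [Group H]
    [MulAction G Ω] [MulAction H Ω] [Infinite Ω] (n : ℕ)
    (h : ∀ x : Fin n → Ω, Function.Injective x →
      MulAction.orbit G x = MulAction.orbit H x) :
    ∀ s ≤ n, ∀ y : Fin s → Ω, Function.Injective y →
      MulAction.orbit G y = MulAction.orbit H y := by
  intro s hs y hy
  obtain ⟨x, hxy⟩ := Fin.Embedding.restrictSurjective_of_le_ENatCard hs
    (by simp [ENat.card_eq_top_of_infinite]) ⟨y, hy⟩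
  obtain rfl : y = x ∘ Fin.castLE hs := congrArg DFunLike.coe hxy.symm
  rw [MulAction.orbit_comp_right, MulAction.orbit_comp_right, h x x.injective]

/-- If `G` and `H` share the same orbits on the set of pairwise-distinct `n`-tuples
of an infinite set `Ω` for some `n ≥ 1`, then for every `s ≤ n` they share the same
orbits on pairwise-distinct `s`-tuples. -/
theorem same_orbits_distinct_tuples_down {Ω G H : Type*} [Group G] [Group H]
    [MulAction G Ω] [MulAction H Ω] [Infinite Ω] (n : ℕ) (hn : 1 ≤ n)
    (h : ∀ x : Fin n → Ω, Function.Injective x →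
      MulAction.orbit G x = MulAction.orbit H x) :
    ∀ s ≤ n, ∀ y : Fin s → Ω, Function.Injective y →
      MulAction.orbit G y = MulAction.orbit H y :=
  same_orbits_distinct_tuples_down_general n h
end

section
/- Let G act oligomorphically on an infinite set Ω and let H be a subgroup of G. If for infinitely many n the number of H-orbits on Ω^(n) equals the number of G-orbits on Ω^(n), then G and H share the same orbits on every Ω^m. -/
/-!
Take a level `n ≥ m` at which the counts agree. Sending an `H`-orbit of injective `n`-tuples to
the `G`-orbit containing it is a surjection between finite sets of the same size, hence injective,
so `G` and `H` have the same orbits on injective `n`-tuples. Since `Ω` is infinite, every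
`m`-tuple is `y ∘ π` for an injective `n`-tuple `y`, and the `G`-equivariant map `· ∘ π` carries
an orbit on which `G` and `H` agree to one on which they agree.
-/

open MulAction Function Set

namespace MulAction

variable {G α β : Type*} [Group G] [MulAction G α] [MulAction G β]

lemma finite_range_orbit [Finite (orbitRel.Quotient G α)] :
    (range fun a : α => orbit G a).Finite :=
  (finite_range orbitRel.Quotient.orbit).subset <|
    range_subset_iff.2 fun a => ⟨Quotient.mk'' a, orbitRel.Quotient.orbit_mk a⟩

lemma biUnion_orbit_subgroup (H : Subgroup G) (a : α) :
    ⋃ b ∈ orbit H a, orbit G b = orbit G a :=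
  Subset.antisymm
    (iUnion₂_subset fun _ hb => (orbit_eq_iff.2 (mem_orbit_of_mem_orbit_subgroup hb)).subset)
    (subset_biUnion_of_mem (u := fun b => orbit G b) (mem_orbit_self a))

lemma orbit_eq_orbit_subgroup_of_ncard_eq (H : Subgroup G) {S : Set α}
    (hS : ∀ g : G, ∀ a ∈ S, g • a ∈ S) (hfin : (orbit G '' S).Finite)
    (hcard : (orbit G '' S).ncard = (orbit H '' S).ncard) {a : α} (ha : a ∈ S) :
    orbit G a = orbit H a := by
  set saturate : Set α → Set α := fun O => ⋃ b ∈ O, orbit G b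
  have himage : saturate '' (orbit H '' S) = orbit G '' S := by
    rw [image_image]
    exact image_congr fun b _ => biUnion_orbit_subgroup H b
  have hfinH : (orbit H '' S).Finite :=
    finite_of_ncard_ne_zero <| hcard ▸ (ncard_pos hfin).2 ⟨_, mem_image_of_mem _ ha⟩ |>.ne'
  have hinj : InjOn saturate (orbit H '' S) :=
    injOn_of_ncard_image_eq (himage ▸ hcard) hfinH
  refine Subset.antisymm ?_ (orbit_subgroup_subset H a)
  rintro _ ⟨g, rfl⟩
  have hsat : saturate (orbit H (g • a)) = saturate (orbit H a) := by
    simp only [saturate, biUnion_orbit_subgroup, orbit_smul]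
  rw [← hinj (mem_image_of_mem _ (hS g a ha)) (mem_image_of_mem _ ha) hsat]
  exact mem_orbit_self _

lemma orbit_eq_orbit_subgroup_of_equivariant (H : Subgroup G) {f : α → β}
    (hf : ∀ (g : G) (a : α), f (g • a) = g • f a) {a : α} (ha : orbit G a = orbit H a) :
    orbit G (f a) = orbit H (f a) := by
  refine Subset.antisymm ?_ (orbit_subgroup_subset H _)
  rintro _ ⟨g, rfl⟩
  obtain ⟨h, hh⟩ : g • a ∈ orbit H a := ha ▸ mem_orbit a g
  refine ⟨h, ?_⟩
  change (h : G) • f a = g • f a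
  rw [← hf, ← hf, ← hh]
  rfl

end MulAction

lemma exists_injective_comp_eq {Ω ι : Type*} [Infinite Ω] [Finite ι] (x : ι → Ω) {n : ℕ}
    (hn : Nat.card ι ≤ n) : ∃ (y : Fin n → Ω) (π : ι → Fin n), Injective y ∧ y ∘ π = x := by
  classical
  have := Fintype.ofFinite ι
  obtain ⟨t, hxt, htn⟩ := Infinite.exists_superset_card_eq (Finset.univ.image x) n <|
    Finset.card_image_le.trans (by simpa [Nat.card_eq_fintype_card] using hn)
  let e : t ≃ Fin n := t.equivFinOfCardEq htn
  refine ⟨fun j => e.symm j, fun i => e ⟨x i, hxt (Finset.mem_image_of_mem x (Finset.mem_univ i))⟩,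
    Subtype.val_injective.comp e.symm.injective, ?_⟩
  funext i
  simp

/-- Let `G` act oligomorphically on an infinite set `Ω` and `H ≤ G`. If for
infinitely many `n` the number of `H`-orbits on pairwise-distinct `n`-tuples equals
the number of `G`-orbits, then `G` and `H` share the same orbits on every `Ω^m`. -/
theorem same_orbits_of_orbit_counts {Ω G : Type*} [Group G] [MulAction G Ω] [Infinite Ω]
    (holig : ∀ n : ℕ, Finite (MulAction.orbitRel.Quotient G (Fin n → Ω)))
    (H : Subgroup G)
    (hcard : ∀ N : ℕ, ∃ n ≥ N,
      Nat.card {s : Set (Fin n → Ω) |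
          ∃ x : Fin n → Ω, Function.Injective x ∧ s = MulAction.orbit G x} =
      Nat.card {s : Set (Fin n → Ω) |
          ∃ x : Fin n → Ω, Function.Injective x ∧ s = MulAction.orbit (↥H) x}) :
    ∀ (m : ℕ) (x : Fin m → Ω), MulAction.orbit G x = MulAction.orbit (↥H) x := by
  intro m x
  obtain ⟨n, hmn, hcount⟩ := hcard m
  have := holig n
  replace hcount : (orbit G '' {y : Fin n → Ω | Injective y}).ncard =
      (orbit H '' {y : Fin n → Ω | Injective y}).ncard := by
    simp only [← Nat.card_coe_set_eq]
    convert hcount using 4 <;> ext <;> simp [eq_comm]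
  have hinvariant : ∀ (g : G) (y : Fin n → Ω), Injective y → Injective (g • y) :=
    fun g _ hy => (MulAction.injective g).comp hy
  have hsame : ∀ y : Fin n → Ω, Injective y → orbit G y = orbit H y := fun _ =>
    orbit_eq_orbit_subgroup_of_ncard_eq H hinvariant
      (finite_range_orbit.subset (image_subset_range _ _)) hcount
  obtain ⟨y, π, hy, rfl⟩ := exists_injective_comp_eq x (by simpa using hmn)
  exact orbit_eq_orbit_subgroup_of_equivariant H (f := fun z : Fin n → Ω => z ∘ π)
    (fun _ _ => rfl) (hsame y hy)
end

section
/- Let G act on an infinite set Ω and suppose for every finite Γ ⊆ Ω the pointwise stabilizer G_Γ has no fixed point in Ω \ Γ. Then for every finite Γ ⊆ Ω, the pointwise stabilizer G_Γ has no finite orbit contained in Ω \ Γ. -/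
/-! If the orbit `O` of `y ∉ Γ` under `G_Γ` were finite, then `Γ ∪ (O \ {y})` would be finite and
not contain `y`. An element of its stabilizer moving `y` lies in `G_Γ`, so it sends `y` to a point
of `O \ {y}`, which it must fix; cancelling `g` gives `g • y = y`. -/

open MulAction

section

variable {G Ω : Type*} [Group G] [MulAction G Ω]

theorem smul_eq_self_of_mem_fixingSubgroup_diff_singleton {s : Set Ω} {y : Ω} {g : G}
    (hg : g ∈ fixingSubgroup G (s \ {y})) (hgy : g • y ∈ s) : g • y = y := by
  by_contra hne
  exact hne (smul_left_cancel g ((mem_fixingSubgroup_iff G).mp hg _ ⟨hgy, hne⟩))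

theorem smul_eq_self_of_mem_fixingSubgroup_union_orbit [DecidableEq Ω] (Γ : Finset Ω) (y : Ω)
    (hfin : (orbit (fixingSubgroup G (Γ : Set Ω)) y).Finite) {g : G}
    (hg : g ∈ fixingSubgroup G (↑(Γ ∪ hfin.toFinset.erase y) : Set Ω)) : g • y = y := by
  rw [Finset.coe_union, fixingSubgroup_union, Finset.coe_erase, Set.Finite.coe_toFinset] at hg
  exact smul_eq_self_of_mem_fixingSubgroup_diff_singleton hg.2 ⟨⟨g, hg.1⟩, rfl⟩

end

theorem orbit_infinite_of_no_fixed_points_general {Ω G : Type*} [Group G] [MulAction G Ω]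
    (h : ∀ (Γ : Finset Ω) (y : Ω), y ∉ Γ →
      ∃ g ∈ fixingSubgroup G (↑Γ : Set Ω), g • y ≠ y) :
    ∀ (Γ : Finset Ω) (y : Ω), y ∉ Γ →
      (MulAction.orbit (↥(fixingSubgroup G (↑Γ : Set Ω))) y).Infinite := by
  classical
  intro Γ y hy hfin
  obtain ⟨g, hg, hgy⟩ := h (Γ ∪ hfin.toFinset.erase y) y (by simp [hy])
  exact hgy (smul_eq_self_of_mem_fixingSubgroup_union_orbit Γ y hfin hg)

/-- If for every finite `Γ ⊆ Ω` the pointwise stabilizer `G_Γ` has no fixed point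
outside `Γ`, then `G_Γ` has no finite orbit outside `Γ`, i.e. every orbit of a
point outside `Γ` is infinite. -/
theorem orbit_infinite_of_no_fixed_points {Ω G : Type*} [Group G] [MulAction G Ω]
    [Infinite Ω]
    (h : ∀ (Γ : Finset Ω) (y : Ω), y ∉ Γ →
      ∃ g ∈ fixingSubgroup G (↑Γ : Set Ω), g • y ≠ y) :
    ∀ (Γ : Finset Ω) (y : Ω), y ∉ Γ →
      (MulAction.orbit (↥(fixingSubgroup G (↑Γ : Set Ω))) y).Infinite :=
  orbit_infinite_of_no_fixed_points_general h
end

section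
/- Let Ω be an infinite set with a highly homogeneous action of G, let k be a commutative ring, and R = k[Ω] the polynomial ring with indeterminates Ω, with G acting by permuting variables. Then for every finite Γ ⊆ Ω, the ring of G_Γ-invariants of R is exactly k[Γ]. -/
/-!
Write `cl Δ` for the set of points fixed by the pointwise stabiliser `G_Δ`. This is a closure
operator commuting with the action of `G`, and when `x ∈ cl Δ` we have `cl (Δ ∪ {x}) = cl Δ`.
High homogeneity makes `cl Δ` finite for finite `Δ`: a point `y ∈ cl Δ \ Δ` is determined by how an
element of `G` carrying `Δ ∪ {y}` onto a fixed `Δ ∪ {y₀}` acts on `Δ`. If some `x ∉ Δ` lay in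
`cl Δ`, then for `w ∉ cl Δ` the set `cl (Δ ∪ {w})` would both strictly contain `cl Δ` and be a
translate of `cl (Δ ∪ {x}) = cl Δ`. Hence `cl Δ = Δ`, so every `G_Γ`-orbit outside `Γ` is
infinite. The variables of a `G_Γ`-invariant polynomial form a finite union of `G_Γ`-orbits, so
they lie in `Γ`.
-/

open MulAction MvPolynomial Pointwise

namespace MvPolynomial

variable {σ R G : Type*} [CommSemiring R] [Group G] [MulAction G σ]

theorem orbit_subset_vars {H : Subgroup G} {P : MvPolynomial σ R}
    (hP : ∀ g ∈ H, rename (fun x => g • x) P = P) {x : σ} (hx : x ∈ P.vars) :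
    orbit H x ⊆ P.vars := by
  rintro _ ⟨g, rfl⟩
  have hx' : x ∈ (rename (fun y => (g : G)⁻¹ • y) P).vars := by
    rwa [hP _ (H.inv_mem g.2)]
  obtain ⟨i, hi, rfl⟩ := mem_vars_rename _ _ hx'
  show (g : G) • (g : G)⁻¹ • i ∈ P.vars
  rwa [smul_inv_smul]

theorem rename_eq_self_of_mem_supported {f : σ → σ} {s : Set σ} (hf : ∀ x ∈ s, f x = x)
    {P : MvPolynomial σ R} (hP : P ∈ supported R s) : rename f P = P := by
  rw [supported_eq_range_rename, AlgHom.mem_range] at hP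
  obtain ⟨Q, rfl⟩ := hP
  rw [rename_rename, show f ∘ Subtype.val = Subtype.val from _root_.funext fun a : s => hf a a.2]

end MvPolynomial

def IsHighlyHomogeneous (G Ω : Type*) [Group G] [MulAction G Ω] [DecidableEq Ω] : Prop :=
  ∀ A B : Finset Ω, A.card = B.card → ∃ g : G, A.image (fun x => g • x) = B

def fixingClosure (G : Type*) {Ω : Type*} [Group G] [MulAction G Ω] (s : Set Ω) : Set Ω :=
  fixedPoints (fixingSubgroup G s) Ω

section FixingClosure

variable {G Ω : Type*} [Group G] [MulAction G Ω]

theorem mem_fixingClosure_iff {s : Set Ω} {y : Ω} :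
    y ∈ fixingClosure G s ↔ ∀ g ∈ fixingSubgroup G s, g • y = y :=
  ⟨fun h g hg => h ⟨g, hg⟩, fun h g => h g g.2⟩

theorem subset_fixingClosure (s : Set Ω) : s ⊆ fixingClosure G s :=
  (fixingSubgroup_fixedPoints_gc G Ω).le_u_l s

theorem fixingClosure_mono : Monotone (fixingClosure G : Set Ω → Set Ω) :=
  fun _ _ h => (fixingSubgroup_fixedPoints_gc G Ω).monotone_u
    ((fixingSubgroup_fixedPoints_gc G Ω).monotone_l h)

theorem fixingClosure_fixingClosure (s : Set Ω) :
    fixingClosure G (fixingClosure G s) = fixingClosure G s :=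
  (fixingSubgroup_fixedPoints_gc G Ω).u_l_u_eq_u _

theorem fixingClosure_insert_of_mem {s : Set Ω} {x : Ω} (hx : x ∈ fixingClosure G s) :
    fixingClosure G (insert x s) = fixingClosure G s :=
  le_antisymm
    ((fixingClosure_mono (Set.insert_subset hx (subset_fixingClosure s))).trans_eq
      (fixingClosure_fixingClosure s))
    (fixingClosure_mono (Set.subset_insert x s))

theorem fixingClosure_smul (g : G) (s : Set Ω) :
    fixingClosure G (g • s) = g • fixingClosure G s := by
  ext y
  rw [Set.mem_smul_set_iff_inv_smul_mem, mem_fixingClosure_iff, mem_fixingClosure_iff,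
    SubMulAction.fixingSubgroup_smul_eq_fixingSubgroup_map_conj]
  simp only [Subgroup.mem_map, MulEquiv.coe_toMonoidHom, MulAut.conj_apply, forall_exists_index,
    and_imp, forall_apply_eq_imp_iff₂, mul_smul, smul_eq_iff_eq_inv_smul g]

theorem eq_of_smul_insert_eq {s : Set Ω} {x y : Ω} {g h : G} (hx : x ∈ fixingClosure G s)
    (hxs : x ∉ s) (hgh : ∀ d ∈ s, g • d = h • d) (heq : g • insert x s = h • insert y s) :
    x = y := by
  have hfix : h⁻¹ * g ∈ fixingSubgroup G s := by
    rw [mem_fixingSubgroup_iff]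
    intro d hd
    rw [mul_smul, hgh d hd, inv_smul_smul]
  have hgx : g • x = h • x := by
    rw [← inv_smul_eq_iff, ← mul_smul]
    exact mem_fixingClosure_iff.mp hx _ hfix
  have hmem : h • x ∈ h • insert y s := by
    rw [← hgx, ← heq]
    exact Set.smul_mem_smul_set (Set.mem_insert x s)
  rcases Set.smul_mem_smul_set_iff.mp hmem with hxy | hxs'
  · exact hxy
  · exact absurd hxs' hxs

variable [DecidableEq Ω]

theorem IsHighlyHomogeneous.exists_smul_insert_eq (hh : IsHighlyHomogeneous G Ω) {s : Finset Ω}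
    {x y : Ω} (hx : x ∉ s) (hy : y ∉ s) :
    ∃ g : G, g • insert x (s : Set Ω) = insert y (s : Set Ω) := by
  obtain ⟨g, hg⟩ := hh (insert x s) (insert y s) (by
    rw [Finset.card_insert_of_notMem hx, Finset.card_insert_of_notMem hy])
  refine ⟨g, ?_⟩
  rw [← Finset.coe_insert, ← Finset.coe_insert, ← hg, Finset.coe_image, Set.image_smul]

variable [Infinite Ω]

theorem IsHighlyHomogeneous.finite_fixingClosure (hh : IsHighlyHomogeneous G Ω) (s : Finset Ω) :
    (fixingClosure G (s : Set Ω)).Finite := by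
  obtain ⟨y₀, hy₀⟩ := Infinite.exists_notMem_finset s
  have htransl : ∀ y ∈ fixingClosure G s \ s,
      ∃ g : G, g • insert y (s : Set Ω) = insert y₀ (s : Set Ω) :=
    fun y hy => hh.exists_smul_insert_eq hy.2 hy₀
  choose! g hg using htransl
  refine Set.Finite.of_sdiff ?_ s.finite_toSet
  refine Set.Finite.of_injOn (f := fun y (d : s) => g y • (d : Ω))
    (t := Set.pi Set.univ fun _ => insert y₀ (s : Set Ω)) ?_ ?_
    (Set.Finite.pi fun _ => s.finite_toSet.insert y₀)
  · intro y hy d _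
    rw [← hg y hy]
    exact Set.smul_mem_smul_set (Set.mem_insert_of_mem y d.2)
  · intro y hy z hz hyz
    refine eq_of_smul_insert_eq hy.1 hy.2 (fun d hd => congrFun hyz ⟨d, hd⟩) ?_
    rw [hg y hy, hg z hz]

theorem IsHighlyHomogeneous.fixingClosure_eq_self (hh : IsHighlyHomogeneous G Ω) {s : Set Ω}
    (hs : s.Finite) : fixingClosure G s = s := by
  obtain ⟨s, rfl⟩ := hs.exists_finset_coe
  refine (subset_fixingClosure (s : Set Ω)).antisymm' fun x hx => ?_
  by_contra hxs
  have hfin := hh.finite_fixingClosure s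
  obtain ⟨w, -, hw⟩ := Set.infinite_univ.exists_notMem_finite hfin
  obtain ⟨g, hg⟩ := hh.exists_smul_insert_eq hxs fun h => hw (subset_fixingClosure _ h)
  have htransl : fixingClosure G (insert w (s : Set Ω)) = g • fixingClosure G s := by
    rw [← hg, fixingClosure_smul, fixingClosure_insert_of_mem hx]
  have hlt : fixingClosure G s ⊂ fixingClosure G (insert w (s : Set Ω)) :=
    (fixingClosure_mono (Set.subset_insert w _)).ssubset_of_not_subset
      fun h => hw (h (subset_fixingClosure _ (Set.mem_insert w _)))
  have := hfin.encard_lt_encard hlt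
  rw [htransl, Set.encard_smul_set] at this
  exact lt_irrefl _ this

theorem IsHighlyHomogeneous.infinite_orbit_fixingSubgroup (hh : IsHighlyHomogeneous G Ω)
    {Γ : Set Ω} (hΓ : Γ.Finite) {x : Ω} (hx : x ∉ Γ) :
    (orbit (fixingSubgroup G Γ) x).Infinite := by
  intro horbit
  set Δ := Γ ∪ (orbit (fixingSubgroup G Γ) x \ {x})
  have hxΔ : x ∉ fixingClosure G Δ := by
    rw [hh.fixingClosure_eq_self (hΓ.union horbit.sdiff)]
    simp [hx]
  obtain ⟨g, hgΔ, hgx⟩ : ∃ g ∈ fixingSubgroup G Δ, g • x ≠ x := by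
    simpa [mem_fixingClosure_iff] using hxΔ
  have hgΓ : g ∈ fixingSubgroup G Γ := fixingSubgroup_antitone G Ω Set.subset_union_left hgΔ
  have hgxΔ : g • x ∈ Δ := Or.inr ⟨⟨⟨g, hgΓ⟩, rfl⟩, hgx⟩
  exact hgx (MulAction.injective g ((mem_fixingSubgroup_iff G).mp hgΔ _ hgxΔ))

end FixingClosure

/-- Let `G` act highly homogeneously on an infinite set `Ω` and `k` be a commutative
ring. For every finite `Γ ⊆ Ω`, the `G_Γ`-invariants of the polynomial ring
`k[Ω]` are exactly `k[Γ]`. -/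
theorem invariants_eq_supported {Ω G : Type*} [Group G] [MulAction G Ω] [Infinite Ω]
    [DecidableEq Ω] {k : Type*} [CommRing k]
    (hh : ∀ A B : Finset Ω, A.card = B.card →
      ∃ g : G, A.image (fun x => g • x) = B)
    (Γ : Finset Ω) :
    {P : MvPolynomial Ω k | ∀ g ∈ fixingSubgroup G (↑Γ : Set Ω),
        MvPolynomial.rename (fun x : Ω => g • x) P = P} =
      (MvPolynomial.supported k (↑Γ : Set Ω) : Set (MvPolynomial Ω k)) := by
  ext P
  constructor
  · intro hP
    rw [SetLike.mem_coe, mem_supported]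
    intro x hx
    by_contra hxΓ
    exact IsHighlyHomogeneous.infinite_orbit_fixingSubgroup hh Γ.finite_toSet hxΓ
      (P.vars.finite_toSet.subset (orbit_subset_vars hP hx))
  · intro hP g hg
    exact rename_eq_self_of_mem_supported ((mem_fixingSubgroup_iff G).mp hg) hP
end
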